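/- Let X be a proper geodesic metric space with base point o, let G be a countable group acting freely on X by isometries, let μ be a G-invariant Borel measure on X that is finite and positive on open balls, and let M₀ ⊆ X be a Borel fundamental domain for the action with B(o, d) ⊆ M₀ ⊆ B(o, D) for some 0 < d < D. Then the limit v := lim_{R→∞} (1/R) log μ(B(o, R)) exists, is finite, and equals lim_{R→∞} (1/R) log π(R), where π(R) = #{g ∈ G : d(o, g·o) ≤ R}; in particular the latter limit also exists. -/

import Mathlib

open Filter Metric Topology MeasureTheory ENNReal Pointwise

/-!
The balls `B(g • o, d)` with `d(o, g • o) ≤ R` are disjoint translates of `B(o, d)` inside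
`B(o, R + d)`, while the balls `B(g • o, D)` with `d(o, g • o) ≤ R + D` cover `B(o, R)`. Hence
`log μ(B(o, R))` lies between `log π(R - d)` and `log π(R + D)` up to additive constants, and it
suffices that `log π(R) / R` converges. Splitting geodesics from `o` gives
`π(R + T) ≤ π(R + D) π(T + D)`, so `n ↦ log π(n + 2D)` is subadditive and Fekete's lemma applies.
-/

lemma tendsto_comp_add_add_div {f : ℝ → ℝ} {v : ℝ}
    (hf : Tendsto (fun R => f R / R) atTop (𝓝 v)) (a b : ℝ) :
    Tendsto (fun R => (f (R + a) + b) / R) atTop (𝓝 v) := by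
  have hshift : Tendsto (fun R => f (R + a) / (R + a)) atTop (𝓝 v) :=
    hf.comp (tendsto_atTop_add_const_right atTop a tendsto_id)
  have hratio : Tendsto (fun R : ℝ => (R + a) / R) atTop (𝓝 1) := by
    have h : Tendsto (fun R : ℝ => 1 + a / R) atTop (𝓝 (1 + 0)) :=
      tendsto_const_nhds.add (tendsto_const_nhds.div_atTop tendsto_id)
    rw [add_zero] at h
    refine h.congr' ?_
    filter_upwards [eventually_ne_atTop 0] with R hR
    field_simp
  have h := (hshift.mul hratio).add (tendsto_const_nhds (x := b).div_atTop tendsto_id)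
  rw [mul_one, add_zero] at h
  refine h.congr' ?_
  filter_upwards [eventually_ne_atTop 0, eventually_ne_atTop (-a)] with R hR hRa
  have : R + a ≠ 0 := fun h => hRa (by linarith)
  simp only [id]
  field_simp

lemma tendsto_comp_div_of_tendsto_div_nat {u : ℕ → ℝ} {v : ℝ}
    (hu : Tendsto (fun n : ℕ => u n / n) atTop (𝓝 v)) {k : ℝ → ℕ}
    (hk : Tendsto k atTop atTop) (hk_div : Tendsto (fun R => (k R : ℝ) / R) atTop (𝓝 1)) :
    Tendsto (fun R => u (k R) / R) atTop (𝓝 v) := by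
  have h := (hu.comp hk).mul hk_div
  rw [mul_one] at h
  refine h.congr' ?_
  filter_upwards [hk.eventually_ge_atTop 1] with R hR
  have : (k R : ℝ) ≠ 0 := by positivity
  simp only [Function.comp_apply]
  field_simp

theorem exists_tendsto_div_of_le_add_shift {f : ℝ → ℝ} {c : ℝ} (hc : 0 ≤ c) (hmono : Monotone f)
    (hnonneg : ∀ R, 0 ≤ f R)
    (hsub : ∀ R T, 0 ≤ R → 0 ≤ T → f (R + T) ≤ f (R + c) + f (T + c)) :
    ∃ v, Tendsto (fun R => f R / R) atTop (𝓝 v) := by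
  set u : ℕ → ℝ := fun n => f (n + 2 * c)
  have hu : Subadditive u := fun m n => by
    have h := hsub (m + c) (n + c) (by positivity) (by positivity)
    rwa [show (m : ℝ) + c + (n + c) = ((m + n : ℕ) : ℝ) + 2 * c by push_cast; ring,
      add_assoc (m : ℝ), add_assoc (n : ℝ), ← two_mul] at h
  have hlim := hu.tendsto_lim ⟨0, by
    rintro _ ⟨n, rfl⟩
    exact div_nonneg (hnonneg _) n.cast_nonneg⟩
  refine ⟨hu.lim, ?_⟩
  have hshifted : Tendsto (fun R => f (R + 2 * c) / R) atTop (𝓝 hu.lim) := by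
    refine tendsto_of_tendsto_of_tendsto_of_le_of_le'
      (tendsto_comp_div_of_tendsto_div_nat hlim tendsto_nat_floor_atTop tendsto_nat_floor_div_atTop)
      (tendsto_comp_div_of_tendsto_div_nat hlim tendsto_nat_ceil_atTop tendsto_nat_ceil_div_atTop)
      ?_ ?_ <;> filter_upwards [eventually_gt_atTop 0] with R hR <;>
      refine div_le_div_of_nonneg_right (hmono ?_) hR.le <;> simp only [add_le_add_iff_right]
    · exact Nat.floor_le hR.le
    · exact Nat.le_ceil R
  simpa using tendsto_comp_add_add_div hshifted (-(2 * c)) 0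

lemma Real.log_natCast_monotone : Monotone fun n : ℕ => Real.log n := by
  intro a b hab
  rcases a.eq_zero_or_pos with rfl | ha
  · simpa using Real.log_natCast_nonneg b
  · exact Real.log_le_log (by positivity) (by exact_mod_cast hab)

lemma ENNReal.log_toReal_natCast_mul {n : ℕ} {a : ℝ≥0∞} (hn : n ≠ 0) (ha₀ : a ≠ 0) (ha : a ≠ ⊤) :
    Real.log (n * a).toReal = Real.log n + Real.log a.toReal := by
  rw [toReal_mul, toReal_natCast, Real.log_mul (by positivity) (toReal_pos ha₀ ha).ne']

lemma exists_dist_le_dist_le_of_geodesic {X : Type*} [PseudoMetricSpace X]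
    (hgeo : ∀ p q : X, ∃ γ : ℝ → X, γ 0 = p ∧ γ (dist p q) = q ∧
      ∀ s ∈ Set.Icc 0 (dist p q), ∀ t ∈ Set.Icc 0 (dist p q), dist (γ s) (γ t) = |s - t|)
    (p q : X) {R T : ℝ} (hR : 0 ≤ R) (hT : 0 ≤ T) (hpq : dist p q ≤ R + T) :
    ∃ m, dist p m ≤ R ∧ dist m q ≤ T := by
  obtain ⟨γ, hγ0, hγ1, hγ⟩ := hgeo p q
  set L := dist p q
  have hL : 0 ≤ L := dist_nonneg
  have hmin : min R L ∈ Set.Icc 0 L := ⟨le_min hR hL, min_le_right R L⟩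
  refine ⟨γ (min R L), ?_, ?_⟩
  · rw [← hγ0, hγ 0 ⟨le_rfl, hL⟩ _ hmin, zero_sub, abs_neg, abs_of_nonneg hmin.1]
    exact min_le_left R L
  · rw [← hγ1, hγ _ hmin L ⟨hL, le_rfl⟩, abs_sub_comm, abs_of_nonneg (sub_nonneg.2 hmin.2)]
    rcases min_cases R L with ⟨h, _⟩ | ⟨h, _⟩ <;> rw [h] <;> linarith

def orbitBall (G : Type*) {X : Type*} [Dist X] [SMul G X] (o : X) (R : ℝ) : Set G :=
  {g | dist o (g • o) ≤ R}

section OrbitBall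

variable {X G : Type*} [PseudoMetricSpace X] [Group G] [MulAction G X] {o : X} {d D R T : ℝ}

lemma mem_orbitBall {g : G} : g ∈ orbitBall G o R ↔ dist o (g • o) ≤ R := Iff.rfl

lemma orbitBall_mono : Monotone (orbitBall G o) :=
  fun _ _ h _ hg => hg.trans h

lemma one_mem_orbitBall (hR : 0 ≤ R) : (1 : G) ∈ orbitBall G o R := by
  simpa [mem_orbitBall] using hR

lemma ncard_orbitBall_pos (hfin : (orbitBall G o R).Finite) (hR : 0 ≤ R) :
    0 < (orbitBall G o R).ncard :=
  (Set.ncard_pos hfin).2 ⟨1, one_mem_orbitBall hR⟩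

variable [IsIsometricSMul G X]

/-- `g ↦ (h, h⁻¹ * g)` is injective, where `h • o` is an orbit point within `D` of a point
splitting `o` and `g • o` at distances `R` and `T`. -/
lemma ncard_orbitBall_add_le_mul (hcov : ∀ x : X, ∃ g : G, dist x (g • o) < D)
    (hsplit : ∀ p q : X, ∀ {R T : ℝ}, 0 ≤ R → 0 ≤ T → dist p q ≤ R + T →
      ∃ m, dist p m ≤ R ∧ dist m q ≤ T)
    (hfin : ∀ R, (orbitBall G o R).Finite) (hR : 0 ≤ R) (hT : 0 ≤ T) :
    (orbitBall G o (R + T)).ncard ≤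
      (orbitBall G o (R + D)).ncard * (orbitBall G o (T + D)).ncard := by
  have hfactor : ∀ g ∈ orbitBall G o (R + T),
      ∃ h ∈ orbitBall G o (R + D), h⁻¹ * g ∈ orbitBall G o (T + D) := by
    intro g hg
    obtain ⟨m, hom, hmg⟩ := hsplit o (g • o) hR hT hg
    obtain ⟨h, hmh⟩ := hcov m
    refine ⟨h, ?_, ?_⟩
    · rw [mem_orbitBall]
      linarith [dist_triangle o m (h • o)]
    · rw [mem_orbitBall, ← dist_smul h, mul_smul, smul_inv_smul]
      linarith [dist_triangle (h • o) m (g • o), dist_comm m (h • o)]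
  choose! f hf hf_inv using hfactor
  rw [← Set.ncard_prod]
  refine Set.ncard_le_ncard_of_injOn (fun g => (f g, (f g)⁻¹ * g))
    (fun g hg => ⟨hf g hg, hf_inv g hg⟩) ?_ ((hfin _).prod (hfin _))
  intro a _ b _ hab
  simp only [Prod.mk.injEq] at hab
  rw [hab.1] at hab
  exact mul_left_cancel hab.2

lemma exists_tendsto_log_ncard_orbitBall_div (hcov : ∀ x : X, ∃ g : G, dist x (g • o) < D)
    (hsplit : ∀ p q : X, ∀ {R T : ℝ}, 0 ≤ R → 0 ≤ T → dist p q ≤ R + T →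
      ∃ m, dist p m ≤ R ∧ dist m q ≤ T)
    (hfin : ∀ R, (orbitBall G o R).Finite) :
    ∃ v, Tendsto (fun R => Real.log (orbitBall G o R).ncard / R) atTop (𝓝 v) := by
  obtain ⟨g, hg⟩ := hcov o
  have hD : 0 ≤ D := dist_nonneg.trans hg.le
  have hmono : Monotone fun R => Real.log (orbitBall G o R).ncard := fun R₁ R₂ h =>
    Real.log_natCast_monotone (Set.ncard_le_ncard (orbitBall_mono h) (hfin R₂))
  refine exists_tendsto_div_of_le_add_shift hD hmono (fun R => Real.log_natCast_nonneg _) ?_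
  intro R T hR hT
  have hRD := ncard_orbitBall_pos (hfin (R + D)) (by linarith)
  have hTD := ncard_orbitBall_pos (hfin (T + D)) (by linarith)
  rw [← Real.log_mul (by positivity) (by positivity), ← Nat.cast_mul]
  exact Real.log_natCast_monotone (ncard_orbitBall_add_le_mul hcov hsplit hfin hR hT)

variable [MeasurableSpace X] (μ : Measure X) [SMulInvariantMeasure G X μ]

lemma measure_ball_smul (g : G) (o : X) (r : ℝ) : μ (ball (g • o) r) = μ (ball o r) := by
  rw [← Metric.smul_ball, measure_smul]

lemma measure_ball_le_ncard_orbitBall_mul (hcov : ∀ x : X, ∃ g : G, dist x (g • o) < D)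
    (hfin : (orbitBall G o (R + D)).Finite) :
    μ (ball o R) ≤ (orbitBall G o (R + D)).ncard * μ (ball o D) := by
  have hsub : ball o R ⊆ ⋃ g ∈ hfin.toFinset, ball (g • o) D := by
    intro x hx
    obtain ⟨g, hg⟩ := hcov x
    have hgR : g ∈ orbitBall G o (R + D) := by
      rw [mem_orbitBall]
      linarith [dist_triangle o x (g • o), mem_ball'.1 hx]
    exact Set.mem_biUnion (hfin.mem_toFinset.2 hgR) hg
  calc μ (ball o R) ≤ μ (⋃ g ∈ hfin.toFinset, ball (g • o) D) := measure_mono hsub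
    _ ≤ ∑ g ∈ hfin.toFinset, μ (ball (g • o) D) := measure_biUnion_finset_le _ _
    _ = (orbitBall G o (R + D)).ncard * μ (ball o D) := by
      simp [measure_ball_smul, Set.ncard_eq_toFinset_card _ hfin]

variable [OpensMeasurableSpace X]

lemma card_mul_measure_ball_le
    (hdisj : Pairwise fun g h : G => Disjoint (ball (g • o) d) (ball (h • o) d))
    {F : Finset G} (hF : ↑F ⊆ orbitBall G o R) :
    F.card * μ (ball o d) ≤ μ (ball o (R + d)) :=
  calc F.card * μ (ball o d) = ∑ g ∈ F, μ (ball (g • o) d) := by simp [measure_ball_smul]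
    _ = μ (⋃ g ∈ F, ball (g • o) d) :=
      (measure_biUnion_finset (hdisj.set_pairwise _) fun _ _ => measurableSet_ball).symm
    _ ≤ μ (ball o (R + d)) := measure_mono <| Set.iUnion₂_subset fun g hg =>
      ball_subset_ball' (by rw [dist_comm]; linarith [mem_orbitBall.1 (hF hg)])

lemma orbitBall_finite
    (hdisj : Pairwise fun g h : G => Disjoint (ball (g • o) d) (ball (h • o) d))
    (hd : μ (ball o d) ≠ 0) (hR : μ (ball o (R + d)) ≠ ⊤) : (orbitBall G o R).Finite := by
  by_contra hinf
  obtain ⟨n, hn⟩ := ENNReal.exists_nat_mul_gt hd hR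
  obtain ⟨F, hF, rfl⟩ := Set.Infinite.exists_subset_card_eq hinf n
  exact (card_mul_measure_ball_le μ hdisj hF).not_gt hn

lemma ncard_orbitBall_mul_measure_ball_le
    (hdisj : Pairwise fun g h : G => Disjoint (ball (g • o) d) (ball (h • o) d))
    (hfin : (orbitBall G o R).Finite) :
    (orbitBall G o R).ncard * μ (ball o d) ≤ μ (ball o (R + d)) := by
  rw [Set.ncard_eq_toFinset_card _ hfin]
  exact card_mul_measure_ball_le μ hdisj (by simp)

lemma tendsto_log_measure_ball_div
    (hdisj : Pairwise fun g h : G => Disjoint (ball (g • o) d) (ball (h • o) d))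
    (hcov : ∀ x : X, ∃ g : G, dist x (g • o) < D) (hfin : ∀ R, (orbitBall G o R).Finite)
    (hd : μ (ball o d) ≠ 0) (hD : μ (ball o D) ≠ 0) (hμ : ∀ r, μ (ball o r) ≠ ⊤) {v : ℝ}
    (hv : Tendsto (fun R => Real.log (orbitBall G o R).ncard / R) atTop (𝓝 v)) :
    Tendsto (fun R => Real.log (μ (ball o R)).toReal / R) atTop (𝓝 v) := by
  refine tendsto_of_tendsto_of_tendsto_of_le_of_le'
    (tendsto_comp_add_add_div hv (-d) (Real.log (μ (ball o d)).toReal))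
    (tendsto_comp_add_add_div hv D (Real.log (μ (ball o D)).toReal)) ?_ ?_ <;>
    filter_upwards [eventually_ge_atTop d, eventually_gt_atTop 0] with R hRd hR <;>
    refine div_le_div_of_nonneg_right ?_ hR.le
  · have hpack := ncard_orbitBall_mul_measure_ball_le μ hdisj (hfin (R + -d))
    rw [neg_add_cancel_right] at hpack
    have hN := ncard_orbitBall_pos (hfin (R + -d)) (by linarith)
    rw [← ENNReal.log_toReal_natCast_mul hN.ne' hd (hμ d)]
    exact Real.log_le_log (toReal_pos (mul_ne_zero (by positivity) hd)
      (mul_ne_top (natCast_ne_top _) (hμ d))) (toReal_mono (hμ R) hpack)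
  · have hR₀ : μ (ball o R) ≠ 0 := fun h => hd (measure_mono_null (ball_subset_ball hRd) h)
    have hD₀ : 0 < D := nonempty_ball.1 (nonempty_of_measure_ne_zero hD)
    have hN := ncard_orbitBall_pos (hfin (R + D)) (by linarith)
    rw [← ENNReal.log_toReal_natCast_mul hN.ne' hD (hμ D)]
    exact Real.log_le_log (toReal_pos hR₀ (hμ R)) (toReal_mono
      (mul_ne_top (natCast_ne_top _) (hμ D)) (measure_ball_le_ncard_orbitBall_mul μ hcov (hfin _)))

end OrbitBall

theorem volume_entropy_eq_orbit_growth_general {X : Type*} [MetricSpace X]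
    [MeasurableSpace X] [BorelSpace X] (o : X)
    (hgeo : ∀ p q : X, ∃ γ : ℝ → X, γ 0 = p ∧ γ (dist p q) = q ∧
      ∀ s ∈ Set.Icc 0 (dist p q), ∀ t ∈ Set.Icc 0 (dist p q),
        dist (γ s) (γ t) = |s - t|)
    {G : Type*} [Group G] [MulAction G X]
    (hiso : ∀ g : G, Isometry (fun x : X => g • x))
    (μ : Measure X)
    (hinv : ∀ g : G, Measure.map (fun x : X => g • x) μ = μ)
    (hballs : ∀ (x : X) (r : ℝ), 0 < r → 0 < μ (Metric.ball x r) ∧ μ (Metric.ball x r) < ⊤)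
    (M₀ : Set X)
    (hdisj : ∀ g h : G, g ≠ h → Disjoint (g • M₀) (h • M₀))
    (hcover : ⋃ g : G, g • M₀ = Set.univ)
    (d D : ℝ) (hd : 0 < d) (hdD : d < D)
    (hball : Metric.ball o d ⊆ M₀) (hM₀D : M₀ ⊆ Metric.ball o D) :
    ∃ v : ℝ,
      Tendsto (fun R : ℝ => (1 / R) * Real.log (μ (Metric.ball o R)).toReal) atTop (𝓝 v) ∧
      Tendsto (fun R : ℝ => (1 / R) * Real.log ({g : G | dist o (g • o) ≤ R}.ncard)) atTop
        (𝓝 v) := by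
  have : IsIsometricSMul G X := ⟨hiso⟩
  have : SMulInvariantMeasure G X μ := ⟨fun g s hs => by
    rw [← Measure.map_apply (hiso g).continuous.measurable hs, hinv]⟩
  have hdisj_balls : Pairwise fun g h : G => Disjoint (ball (g • o) d) (ball (h • o) d) :=
    fun g h hgh => by
      simpa only [Metric.smul_ball] using
        (hdisj g h hgh).mono (Set.smul_set_mono hball) (Set.smul_set_mono hball)
  have hcov : ∀ x : X, ∃ g : G, dist x (g • o) < D := fun x => by
    obtain ⟨g, hg⟩ := Set.mem_iUnion.1 (hcover ▸ Set.mem_univ x)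
    exact ⟨g, mem_ball.1 (by simpa only [Metric.smul_ball] using Set.smul_set_mono hM₀D hg)⟩
  have hμ : ∀ r, μ (ball o r) ≠ ⊤ := fun r =>
    (le_or_gt r 0).elim (fun hr => by simp [ball_eq_empty.2 hr]) fun hr => (hballs o r hr).2.ne
  have hfin : ∀ R, (orbitBall G o R).Finite := fun R =>
    orbitBall_finite μ hdisj_balls (hballs o d hd).1.ne' (hμ _)
  obtain ⟨v, hv⟩ :=
    exists_tendsto_log_ncard_orbitBall_div hcov (exists_dist_le_dist_le_of_geodesic hgeo) hfin
  simp only [one_div_mul_eq_div]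
  exact ⟨v, tendsto_log_measure_ball_div μ hdisj_balls hcov hfin (hballs o d hd).1.ne'
    (hballs o D (hd.trans hdD)).1.ne' hμ hv, hv⟩

/-- The volume entropy `v = lim_{R→∞} (1/R) log μ(B(o,R))` exists, is finite, and
equals the critical exponent `lim_{R→∞} (1/R) log π(R)` of the orbit counting
function `π(R) = #{g : d(o, g·o) ≤ R}` of a cocompact free isometric action
preserving `μ`. -/
theorem volume_entropy_eq_orbit_growth {X : Type*} [MetricSpace X] [ProperSpace X]
    [MeasurableSpace X] [BorelSpace X] (o : X)
    (hgeo : ∀ p q : X, ∃ γ : ℝ → X, γ 0 = p ∧ γ (dist p q) = q ∧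
      ∀ s ∈ Set.Icc 0 (dist p q), ∀ t ∈ Set.Icc 0 (dist p q),
        dist (γ s) (γ t) = |s - t|)
    {G : Type*} [Group G] [Countable G] [MulAction G X]
    (hiso : ∀ g : G, Isometry (fun x : X => g • x))
    (hfree : ∀ g : G, g ≠ 1 → ∀ x : X, g • x ≠ x)
    (μ : Measure X)
    (hinv : ∀ g : G, Measure.map (fun x : X => g • x) μ = μ)
    (hballs : ∀ (x : X) (r : ℝ), 0 < r → 0 < μ (Metric.ball x r) ∧ μ (Metric.ball x r) < ⊤)
    (M₀ : Set X) (hM₀ : MeasurableSet M₀)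
    (hdisj : ∀ g h : G, g ≠ h → Disjoint (g • M₀) (h • M₀))
    (hcover : ⋃ g : G, g • M₀ = Set.univ)
    (d D : ℝ) (hd : 0 < d) (hdD : d < D)
    (hball : Metric.ball o d ⊆ M₀) (hM₀D : M₀ ⊆ Metric.ball o D) :
    ∃ v : ℝ,
      Tendsto (fun R : ℝ => (1 / R) * Real.log (μ (Metric.ball o R)).toReal) atTop (𝓝 v) ∧
      Tendsto (fun R : ℝ => (1 / R) * Real.log ({g : G | dist o (g • o) ≤ R}.ncard)) atTop
        (𝓝 v) :=
  volume_entropy_eq_orbit_growth_general o hgeo hiso μ hinv hballs M₀ hdisj hcover d D hd hdD hball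
    hM₀D
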